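/- Let a, b ∈ ℚ. For t ∈ ℂ with Im t > 0, let φ(t) be the symmetric 3×3 complex matrix with rows ((t + a²i, (a²−b²)/2 + abi, −b + ai), ((a²−b²)/2 + abi, t + 2ab + b²i, a + bi), (−b + ai, a + bi, i)). Then φ(t) lies in the Siegel upper half-space ℍ₃, and the theta constant with characteristic ε = (1,1,0), δ = (1,1,0) vanishes there: θ[(1,1,0);(1,1,0)](φ(t), 0) = 0 for every t with Im t > 0. -/

import Mathlib

open Complex Matrix

/-- The genus-`g` theta function with characteristic `[ε; δ]`:
`θ[ε;δ](τ, z) = Σ_{N ∈ ℤ^g} exp(πi (N+ε/2)ᵀ τ (N+ε/2) + 2πi (N+ε/2)ᵀ (z+δ/2))`. -/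
noncomputable def theta (g : ℕ) (ε δ : Fin g → ℤ) (τ : Matrix (Fin g) (Fin g) ℂ)
    (z : Fin g → ℂ) : ℂ :=
  ∑' N : Fin g → ℤ,
    Complex.exp (↑Real.pi * I *
        (∑ j, ∑ k, ((N j : ℂ) + (ε j : ℂ) / 2) * τ j k * ((N k : ℂ) + (ε k : ℂ) / 2)) +
      2 * ↑Real.pi * I *
        (∑ j, ((N j : ℂ) + (ε j : ℂ) / 2) * (z j + (δ j : ℂ) / 2)))

/-- Membership in the Siegel upper half-space: symmetric with positive definite
imaginary part. -/
def SiegelUpper (g : ℕ) (τ : Matrix (Fin g) (Fin g) ℂ) : Prop :=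
  τ.IsSymm ∧ (Matrix.of fun j k => (τ j k).im : Matrix (Fin g) (Fin g) ℝ).PosDef

/-- The period matrix `φ(t)` of the Shimura curve family, for parameters `a, b ∈ ℚ`. -/
noncomputable def phi (a b : ℚ) (t : ℂ) : Matrix (Fin 3) (Fin 3) ℂ :=
  !![t + (a : ℂ)^2 * I, ((a : ℂ)^2 - (b : ℂ)^2)/2 + (a : ℂ)*(b : ℂ)*I, -(b : ℂ) + (a : ℂ)*I;
     ((a : ℂ)^2 - (b : ℂ)^2)/2 + (a : ℂ)*(b : ℂ)*I, t + 2*(a : ℂ)*(b : ℂ) + (b : ℂ)^2 * I,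
       (a : ℂ) + (b : ℂ)*I;
     -(b : ℂ) + (a : ℂ)*I, (a : ℂ) + (b : ℂ)*I, I]

/-!
Write the summation index as `(n₁, n₂, n₃)` and put `x = n₁ + 1/2`, `y = n₂ + 1/2`. Since
`Im φ(t) = Im t · diag(1, 1, 0) + w wᵀ` with `w = (a, b, 1)`, `φ(t)` lies in `ℍ₃`. In the theta
series the sum over `n₃` is a Jacobi theta value `ϑ(z, i)` with `z = (a + bi)(y + xi)`. The
rotation `(x, y) ↦ (-y, x)` of the half-integer lattice multiplies `z` by `-i`, and Jacobi's
transformation `ϑ(-iz, i) = e^{πz²} ϑ(z, i)` shows that it multiplies the inner sum by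
`e^{-2πiy} = -1`. Hence the double series equals its own negative.
-/

open Real

theorem tsum_eq_zero_of_comp_equiv_eq_neg {G β : Type*} [AddCommGroup G] [TopologicalSpace G]
    [IsTopologicalAddGroup G] [T2Space G] [IsAddTorsionFree G] {f : β → G} (e : β ≃ β)
    (h : ∀ x, f (e x) = -f x) : ∑' x, f x = 0 :=
  self_eq_neg.mp <| by rw [← tsum_neg, ← e.tsum_eq f]; exact tsum_congr h

def finThreeArrowEquiv (α : Type*) : (Fin 3 → α) ≃ (α × α) × α where
  toFun N := ((N 0, N 1), N 2)
  invFun p := ![p.1.1, p.1.2, p.2]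
  left_inv N := by funext i; fin_cases i <;> rfl
  right_inv _ := rfl

lemma summable_exp_neg_mul_add_sq {c : ℝ} (hc : 0 < c) (r : ℝ) :
    Summable fun n : ℤ => Real.exp (-c * (n + r) ^ 2) := by
  -- `exp (-c (n + r)²) = exp (-c r²) ‖jacobiTheta₂_term n (i c r / π) (i c / π)‖`
  have hτ : 0 < (((c / π : ℝ) : ℂ) * I).im := by simpa using div_pos hc pi_pos
  refine (((summable_jacobiTheta₂_term_iff (((c * r / π : ℝ) : ℂ) * I) _).mpr hτ).norm.mul_left
    (Real.exp (-c * r ^ 2))).congr fun n => ?_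
  rw [norm_jacobiTheta₂_term, ← Real.exp_add]
  congr 1
  simp only [mul_im, ofReal_re, ofReal_im, I_re, I_im, mul_zero, mul_one, add_zero]
  field_simp
  ring

lemma summable_exp_neg_mul_sum_sq {c : ℝ} (hc : 0 < c) (r₁ r₂ r₃ : ℝ) :
    Summable fun p : (ℤ × ℤ) × ℤ =>
      Real.exp (-c * ((p.1.1 + r₁) ^ 2 + (p.1.2 + r₂) ^ 2 + (p.2 + r₃) ^ 2)) := by
  have h := ((summable_exp_neg_mul_add_sq hc r₁).mul_of_nonneg (summable_exp_neg_mul_add_sq hc r₂)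
    (fun _ => (Real.exp_pos _).le) (fun _ => (Real.exp_pos _).le)).mul_of_nonneg
    (summable_exp_neg_mul_add_sq hc r₃) (fun _ => by positivity) (fun _ => (Real.exp_pos _).le)
  refine h.congr fun p => ?_
  simp only [← Real.exp_add]
  ring_nf

lemma exists_pos_mul_sum_sq_le (a b : ℝ) {T : ℝ} (hT : 0 < T) :
    ∃ d > 0, ∀ x y n : ℝ,
      d * (x ^ 2 + y ^ 2 + n ^ 2) ≤ T * (x ^ 2 + y ^ 2) + (a * x + b * y + n) ^ 2 := by
  set K := a ^ 2 + b ^ 2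
  have hK : 0 ≤ K := by positivity
  obtain ⟨d, hd, hdK, hd₂⟩ : ∃ d > 0, d * (1 + 2 * K) ≤ T ∧ d * 2 ≤ 1 := by
    refine ⟨min T 1 / (2 + 2 * K), by positivity, ?_, ?_⟩ <;>
      rw [div_mul_eq_mul_div, div_le_iff₀ (by positivity)] <;>
      nlinarith [min_le_left T 1, min_le_right T 1]
  refine ⟨d, hd, fun x y n => ?_⟩
  set w := a * x + b * y + n
  have cauchy_schwarz : (a * x + b * y) ^ 2 ≤ K * (x ^ 2 + y ^ 2) := by
    nlinarith [sq_nonneg (a * y - b * x)]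
  have hn : n ^ 2 ≤ 2 * w ^ 2 + 2 * (a * x + b * y) ^ 2 := by
    nlinarith [sq_nonneg (w + (a * x + b * y))]
  calc d * (x ^ 2 + y ^ 2 + n ^ 2) ≤ d * ((1 + 2 * K) * (x ^ 2 + y ^ 2) + 2 * w ^ 2) :=
        mul_le_mul_of_nonneg_left (by linarith) hd.le
    _ = d * (1 + 2 * K) * (x ^ 2 + y ^ 2) + d * 2 * w ^ 2 := by ring
    _ ≤ T * (x ^ 2 + y ^ 2) + 1 * w ^ 2 := by gcongr
    _ = T * (x ^ 2 + y ^ 2) + w ^ 2 := by ring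

lemma jacobiTheta₂_neg_I_mul (z : ℂ) :
    jacobiTheta₂ (-I * z) I = cexp (π * z ^ 2) * jacobiTheta₂ z I := by
  have h := jacobiTheta₂_functional_equation z I
  rw [show -I * I = 1 by simp, one_cpow, div_one, one_mul, div_I, div_I, div_I,
    show -(-1 * I) = I by ring, show -(z * I) = -I * z by ring,
    show -(-(π : ℂ) * I * z ^ 2 * I) = -(π * z ^ 2) by
      linear_combination (π : ℂ) * z ^ 2 * I_sq] at h
  rw [h, ← mul_assoc, ← Complex.exp_add, add_neg_cancel, Complex.exp_zero, one_mul]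

namespace ShimuraTheta

noncomputable section

lemma isSymm_phi (a b : ℚ) (t : ℂ) : (phi a b t).IsSymm :=
  Matrix.IsSymm.ext fun i j => by fin_cases i <;> fin_cases j <;> simp [phi]

lemma dotProduct_im_phi_mulVec (a b : ℚ) (t : ℂ) (x : Fin 3 → ℝ) :
    x ⬝ᵥ (of fun j k => (phi a b t j k).im) *ᵥ x =
      t.im * (x 0 ^ 2 + x 1 ^ 2) + (a * x 0 + b * x 1 + x 2) ^ 2 := by
  simp only [dotProduct, mulVec, phi, sq, of_apply, cons_val', cons_val_fin_one,
    Fin.sum_univ_three, cons_val_zero, cons_val_one, cons_val, add_im, mul_im, mul_re, ratCast_re,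
    ratCast_im, mul_zero, sub_zero, I_im, mul_one, zero_mul, add_zero, I_re, div_ofNat_im, sub_im,
    sub_self, zero_div, zero_add, neg_im, neg_zero, re_ofNat, im_ofNat, one_mul]
  ring

lemma siegelUpper_phi (a b : ℚ) {t : ℂ} (ht : 0 < t.im) : SiegelUpper 3 (phi a b t) := by
  refine ⟨isSymm_phi a b t, posDef_iff_dotProduct_mulVec.mpr ⟨?_, fun x hx => ?_⟩⟩
  · ext i j
    simp [conjTranspose_apply, (isSymm_phi a b t).apply i j]
  rw [star_trivial, dotProduct_im_phi_mulVec]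
  by_cases h : x 0 = 0 ∧ x 1 = 0
  · have hx₂ : x 2 ≠ 0 := fun hx₂ => hx (by ext i; fin_cases i <;> simp [h.1, h.2, hx₂])
    simpa [h.1, h.2] using sq_pos_of_ne_zero hx₂
  · have : 0 < x 0 ^ 2 + x 1 ^ 2 := by
      rcases not_and_or.mp h with h | h <;> positivity
    positivity

def linForm (a b x y : ℝ) : ℝ := a * x + b * y

def thetaArg (a b x y : ℝ) : ℂ := (a + b * I) * (y + x * I)

def outerExponent (a b : ℝ) (t : ℂ) (x y : ℝ) : ℂ :=
  π * I * ((t + a * b) * (x ^ 2 + y ^ 2) + x + y + linForm a b x y * thetaArg a b x y)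

def summand (a b : ℝ) (t : ℂ) (x y : ℝ) (n : ℤ) : ℂ :=
  cexp (outerExponent a b t x y) * jacobiTheta₂_term n (thetaArg a b x y) I

def fiberSum (a b : ℝ) (t : ℂ) (x y : ℝ) : ℂ :=
  cexp (outerExponent a b t x y) * jacobiTheta₂ (thetaArg a b x y) I

lemma theta_phi_eq_tsum (a b : ℚ) (t : ℂ) :
    theta 3 ![1, 1, 0] ![1, 1, 0] (phi a b t) 0 =
      ∑' N : Fin 3 → ℤ, summand a b t (N 0 + 1 / 2) (N 1 + 1 / 2) (N 2) := by
  refine tsum_congr fun N => ?_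
  rw [summand, jacobiTheta₂_term, ← Complex.exp_add]
  congr 1
  simp only [Fin.sum_univ_three, phi, outerExponent, thetaArg, linForm, of_apply, cons_val',
    cons_val_zero, cons_val_one, cons_val_two, empty_val', cons_val_fin_one, head_cons, tail_cons,
    head_fin_const, Pi.zero_apply]
  push_cast
  ring_nf
  simp only [I_sq, I_pow_three]
  ring

lemma norm_summand (a b : ℝ) (t : ℂ) (x y : ℝ) (n : ℤ) :
    ‖summand a b t x y n‖ =
      Real.exp (-π * (t.im * (x ^ 2 + y ^ 2) + (linForm a b x y + n) ^ 2)) := by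
  rw [summand, norm_mul, norm_exp, norm_jacobiTheta₂_term, ← Real.exp_add]
  congr 1
  simp only [outerExponent, sq, linForm, ofReal_add, ofReal_mul, thetaArg, mul_re, ofReal_re, I_re,
    mul_zero, ofReal_im, I_im, mul_one, sub_self, add_re, sub_zero, add_im, mul_im, zero_mul,
    add_zero, zero_add, zero_sub, neg_mul]
  ring

lemma summable_summand (a b : ℝ) {t : ℂ} (ht : 0 < t.im) :
    Summable fun p : (ℤ × ℤ) × ℤ => summand a b t (p.1.1 + 1 / 2) (p.1.2 + 1 / 2) p.2 := by
  obtain ⟨d, hd, hquad⟩ := exists_pos_mul_sum_sq_le a b ht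
  refine .of_norm_bounded (summable_exp_neg_mul_sum_sq (mul_pos pi_pos hd) (1 / 2) (1 / 2) 0)
    fun p => ?_
  rw [norm_summand, Real.exp_le_exp, add_zero]
  have := mul_le_mul_of_nonneg_left (hquad (p.1.1 + 1 / 2) (p.1.2 + 1 / 2) p.2) pi_pos.le
  rw [linForm]
  linarith

lemma fiberSum_rotate (a b : ℝ) (t : ℂ) (x y : ℝ) :
    fiberSum a b t (-y) x = cexp (-2 * π * I * y) * fiberSum a b t x y := by
  have harg : thetaArg a b (-y) x = -I * thetaArg a b x y := by
    simp only [thetaArg]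
    push_cast
    linear_combination ((a : ℂ) + b * I) * x * I_sq
  rw [fiberSum, fiberSum, harg, jacobiTheta₂_neg_I_mul, ← mul_assoc, ← Complex.exp_add,
    ← mul_assoc, ← Complex.exp_add]
  congr 2
  simp only [outerExponent, thetaArg, linForm]
  push_cast
  ring_nf
  simp only [I_sq, I_pow_three, I_pow_four]
  ring

/-- The rotation `(x, y) ↦ (-y, x)` of the half-integer points `x = n₁ + 1/2`, `y = n₂ + 1/2`. -/
def rotate : ℤ × ℤ ≃ ℤ × ℤ where
  toFun q := (-q.2 - 1, q.1)
  invFun q := (q.2, -q.1 - 1)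
  left_inv _ := by simp
  right_inv _ := by simp

lemma fiberSum_rotate_halfInt (a b : ℝ) (t : ℂ) (q : ℤ × ℤ) :
    fiberSum a b t ((rotate q).1 + 1 / 2) ((rotate q).2 + 1 / 2) =
      -fiberSum a b t (q.1 + 1 / 2) (q.2 + 1 / 2) := by
  have hx : ((rotate q).1 : ℝ) + 1 / 2 = -((q.2 : ℝ) + 1 / 2) := by simp [rotate]; ring
  have hsign : cexp (-2 * π * I * ((q.2 + 1 / 2 : ℝ) : ℂ)) = -1 := by
    rw [show -2 * π * I * ((q.2 + 1 / 2 : ℝ) : ℂ) = (-q.2 - 1 : ℤ) * (2 * π * I) + π * I by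
      push_cast; ring, Complex.exp_add, exp_int_mul_two_pi_mul_I, exp_pi_mul_I, one_mul]
  rw [hx, fiberSum_rotate, hsign, neg_one_mul]
  rfl

end

end ShimuraTheta

open ShimuraTheta in
theorem stmt_0 (a b : ℚ) (t : ℂ) (ht : 0 < t.im) :
    SiegelUpper 3 (phi a b t) ∧
      theta 3 ![1, 1, 0] ![1, 1, 0] (phi a b t) 0 = 0 := by
  refine ⟨siegelUpper_phi a b ht, ?_⟩
  calc theta 3 ![1, 1, 0] ![1, 1, 0] (phi a b t) 0
      = ∑' N : Fin 3 → ℤ, summand a b t (N 0 + 1 / 2) (N 1 + 1 / 2) (N 2) :=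
        theta_phi_eq_tsum a b t
    _ = ∑' p : (ℤ × ℤ) × ℤ, summand a b t (p.1.1 + 1 / 2) (p.1.2 + 1 / 2) p.2 :=
        (finThreeArrowEquiv ℤ).tsum_eq fun p => summand a b t (p.1.1 + 1 / 2) (p.1.2 + 1 / 2) p.2
    _ = ∑' q : ℤ × ℤ, ∑' n : ℤ, summand a b t (q.1 + 1 / 2) (q.2 + 1 / 2) n :=
        (summable_summand a b ht).tsum_prod
    _ = ∑' q : ℤ × ℤ, fiberSum a b t (q.1 + 1 / 2) (q.2 + 1 / 2) :=
        tsum_congr fun _ => tsum_mul_left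
    _ = 0 := tsum_eq_zero_of_comp_equiv_eq_neg rotate (fiberSum_rotate_halfInt a b t)
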